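/- arXiv:1808.06328 — 4 statements merged into one kernel-verified Lean document; each statement's English description precedes it below -/
import Mathlib

section
/- (Leading-term lemma for integrals) Let K be a differential field of germs of meromorphic functions and θ an integral over K (θ' = f ∈ K) with |θ| large. Suppose z = Σ_{j ≤ k} z_j θ^{j/p} is a convergent Puiseux series in θ with coefficients z_j ∈ K and leading coefficient z_k ≠ 0. Then: if z_k' ≠ 0, the leading term of the Puiseux series of z' is z_k'·θ^{k/p}; if z_k' = 0, every term of z' has degree < k/p. In either case, every derivative z^{(m)} of z has Puiseux expansion in θ with all terms of degree ≤ k/p. -/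
/-- Formal termwise differentiation of a Puiseux series `z = Σ_{j ≤ k} z_j θ^{j/p}`
(the function `c : ℤ → K` records the coefficient `z_j = c j`) in an integral `θ`
over `K` (`θ' = f ∈ K`): each term `z_j θ^{j/p}` differentiates to
`z_j' θ^{j/p} + (j/p)·f·z_j·θ^{(j-p)/p}`, so the coefficient of `θ^{j/p}` in `z'`
is `δ(c j) + ((j+p)/p)·f·c (j+p)`. -/
noncomputable def DserInt {K : Type*} [Field K] (δ : Derivation ℤ K K) (f : K) (p : ℕ)
    (c : ℤ → K) : ℤ → K :=
  fun j => δ (c j) + (((j + (p : ℤ)) : ℤ) : K) / (p : K) * f * c (j + p)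

namespace DserInt

variable {K : Type*} [Field K] (δ : Derivation ℤ K K) (f : K) (p : ℕ) {k : ℤ} {c : ℤ → K}

theorem eq_zero_of_lt (hsupp : ∀ j, k < j → c j = 0) {j : ℤ} (hj : k < j) :
    DserInt δ f p c j = 0 := by
  simp [DserInt, hsupp j hj, hsupp (j + p) (by omega)]

theorem apply_leading (hp : 0 < p) (hsupp : ∀ j, k < j → c j = 0) :
    DserInt δ f p c k = δ (c k) := by
  simp [DserInt, hsupp (k + p) (by omega)]

theorem iterate_eq_zero_of_lt (hsupp : ∀ j, k < j → c j = 0) (m : ℕ) {j : ℤ} (hj : k < j) :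
    (DserInt δ f p)^[m] c j = 0 := by
  induction m generalizing j with
  | zero => exact hsupp j hj
  | succ m ih =>
    rw [Function.iterate_succ_apply']
    exact eq_zero_of_lt δ f p (fun _ => ih) hj

end DserInt

theorem statement13_general {K : Type*} [Field K] (δ : Derivation ℤ K K)
    (f : K) (p : ℕ) (hp : 0 < p) (k : ℤ) (c : ℤ → K)
    (hsupp : ∀ j, k < j → c j = 0) :
    (δ (c k) ≠ 0 →
      (DserInt δ f p c) k = δ (c k) ∧ ∀ j, k < j → (DserInt δ f p c) j = 0) ∧
    (δ (c k) = 0 → ∀ j, k ≤ j → (DserInt δ f p c) j = 0) ∧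
    (∀ m : ℕ, ∀ j, k < j → ((DserInt δ f p)^[m] c) j = 0) := by
  have hk := DserInt.apply_leading δ f p hp hsupp
  refine ⟨fun _ => ⟨hk, fun j => DserInt.eq_zero_of_lt δ f p hsupp⟩, fun h0 j hj => ?_,
    fun m j => DserInt.iterate_eq_zero_of_lt δ f p hsupp m⟩
  rcases hj.eq_or_lt with rfl | hj
  · rw [hk, h0]
  · exact DserInt.eq_zero_of_lt δ f p hsupp hj

/-- Leading-term lemma for integrals: if `z = Σ_{j ≤ k} z_j θ^{j/p}` with leading
coefficient `z_k ≠ 0`, then: if `z_k' ≠ 0` the leading term of `z'` is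
`z_k'·θ^{k/p}`; if `z_k' = 0` every term of `z'` has degree `< k/p`; and every
derivative `z^{(m)}` has all terms of degree `≤ k/p`. -/
theorem statement13 {K : Type*} [Field K] [CharZero K] (δ : Derivation ℤ K K)
    (f : K) (p : ℕ) (hp : 0 < p) (k : ℤ) (c : ℤ → K)
    (hsupp : ∀ j, k < j → c j = 0) (hlead : c k ≠ 0) :
    (δ (c k) ≠ 0 →
      (DserInt δ f p c) k = δ (c k) ∧ ∀ j, k < j → (DserInt δ f p c) j = 0) ∧
    (δ (c k) = 0 → ∀ j, k ≤ j → (DserInt δ f p c) j = 0) ∧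
    (∀ m : ℕ, ∀ j, k < j → ((DserInt δ f p)^[m] c) j = 0) :=
  statement13_general δ f p hp k c hsupp
end

section
/- Let K be a differential field and let Q be a differential polynomial over K (a polynomial in u, u', u'', … with coefficients in K) of total degree less than n, and consider the equation u^n = Q(u, u', u'', …). Suppose the constant term of T = u^n − Q is nonzero, and suppose u is given by a Puiseux series Σ_{j ≤ k} z_j θ^{j/p} in an integral θ over K (θ' = f ∈ K) with leading coefficient z_k ≠ 0, which formally satisfies T(u, u', …) = 0. Then the leading exponent k/p equals 0, and the leading coefficient z_0 ∈ K satisfies T(z_0, z_0', …) = 0, i.e. z_0 is a solution of u^n = Q(u, u', …) in K. -/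
/-- Formal differentiation of descending Puiseux series in an integral `θ` over
`K` (`θ' = f ∈ K`, denominator `p`), encoded as Laurent (Hahn) series over `ℤ`:
the coefficient at index `m` records the coefficient of `θ^{-m/p}`. The term
`z_j θ^{j/p}` differentiates to `z_j' θ^{j/p} + (j/p)·f·z_j·θ^{(j-p)/p}`. -/
noncomputable def DHahn {K : Type*} [Field K] (δ : Derivation ℤ K K) (f : K) (p : ℕ)
    (z : HahnSeries ℤ K) : HahnSeries ℤ K where
  coeff m := δ (z.coeff m) + (((p : ℤ) - m : ℤ) : K) / (p : K) * f * z.coeff (m - p)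
  isPWO_support' := by
    have h : (Function.support fun m : ℤ =>
        δ (z.coeff m) + (((p : ℤ) - m : ℤ) : K) / (p : K) * f * z.coeff (m - p))
        ⊆ z.support ∪ (fun m => m + (p : ℤ)) '' z.support := by
      intro m hm
      by_cases h1 : z.coeff m = 0
      · by_cases h2 : z.coeff (m - p) = 0
        · exact absurd (by simp [Function.mem_support, h1, h2] : _) hm
        · exact Or.inr ⟨m - p, h2, by ring⟩
      · exact Or.inl h1
    exact ((z.isPWO_support.union
      (z.isPWO_support.image_of_monotone (fun a b hab => by omega))).mono h)

/-! Let `d` be the order of `z` (index `m` stands for `θ^{-m/p}`). Differentiating `θ` only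
produces terms of higher index, so every iterated derivative of `z` has order at least `d`, with
coefficient at `d` the iterated derivative of `z.coeff d`; hence a monomial of degree `k` in them
has order at least `k • d`, with coefficient at `k • d` the same monomial in those coefficients.
Compare coefficients in `z ^ n = Q(z, z', …)`: if `d < 0`, at `n • d` only `z ^ n` contributes,
since `deg Q < n`; if `d > 0`, at `0` only the constant term of `Q` contributes. So `d = 0`, and
the coefficient at `0` is `Q(z_0, z_0', …)`. -/

namespace HahnSeries

variable {Γ R : Type*} [AddCommMonoid Γ] [LinearOrder Γ] [IsOrderedCancelAddMonoid Γ]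

theorem coeff_mul_of_le_orderTop [Semiring R] {x y : HahnSeries Γ R} {a b : Γ}
    (ha : (a : WithTop Γ) ≤ x.orderTop) (hb : (b : WithTop Γ) ≤ y.orderTop) :
    (x * y).coeff (a + b) = x.coeff a * y.coeff b := by
  rw [le_orderTop_iff_forall] at ha hb
  rw [coeff_mul, Finset.sum_eq_single (a, b)]
  · rintro ⟨i, j⟩ hij hne
    have hsum : i + j = a + b := (Finset.mem_antidiagonal.mp hij).2.2
    rcases lt_trichotomy i a with h | rfl | h
    · rw [ha i (WithTop.coe_lt_coe.2 h), zero_mul]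
    · exact absurd (by rw [add_left_cancel hsum]) hne
    · have hj : a + j < a + b := hsum ▸ add_lt_add_of_lt_of_le h le_rfl
      rw [hb j (WithTop.coe_lt_coe.2 (lt_of_add_lt_add_left hj)), mul_zero]
  · intro hab
    by_contra hc
    exact hab (Finset.mem_antidiagonal.2 ⟨(mem_support _ _).2 (left_ne_zero_of_mul hc),
      (mem_support _ _).2 (right_ne_zero_of_mul hc), rfl⟩)

section CommSemiring

variable [CommSemiring R]

theorem le_orderTop_prod {ι : Type*} (t : Finset ι) {x : ι → HahnSeries Γ R} {a : ι → Γ}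
    (h : ∀ i ∈ t, (a i : WithTop Γ) ≤ (x i).orderTop) :
    ((∑ i ∈ t, a i : Γ) : WithTop Γ) ≤ (∏ i ∈ t, x i).orderTop := by
  classical
  induction t using Finset.induction with
  | empty =>
    rw [Finset.sum_empty, Finset.prod_empty, le_orderTop_iff_forall]
    intro j hj
    rw [coeff_one, if_neg (WithTop.coe_lt_coe.1 hj).ne]
  | insert k t hk ih =>
    rw [Finset.sum_insert hk, Finset.prod_insert hk, WithTop.coe_add]
    exact (add_le_add (h k (by simp)) (ih fun i hi => h i (by simp [hi]))).trans
      orderTop_add_le_mul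

theorem coeff_prod_of_le_orderTop {ι : Type*} (t : Finset ι) {x : ι → HahnSeries Γ R}
    {a : ι → Γ} (h : ∀ i ∈ t, (a i : WithTop Γ) ≤ (x i).orderTop) :
    (∏ i ∈ t, x i).coeff (∑ i ∈ t, a i) = ∏ i ∈ t, (x i).coeff (a i) := by
  classical
  induction t using Finset.induction with
  | empty => simp [coeff_one]
  | insert k t hk ih =>
    have ht : ∀ i ∈ t, (a i : WithTop Γ) ≤ (x i).orderTop := fun i hi => h i (by simp [hi])
    rw [Finset.sum_insert hk, Finset.prod_insert hk, Finset.prod_insert hk,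
      coeff_mul_of_le_orderTop (h k (by simp)) (le_orderTop_prod t ht), ih ht]

theorem le_orderTop_pow {x : HahnSeries Γ R} {a : Γ} (ha : (a : WithTop Γ) ≤ x.orderTop)
    (n : ℕ) : ((n • a : Γ) : WithTop Γ) ≤ (x ^ n).orderTop := by
  simpa using le_orderTop_prod (Finset.range n) fun _ _ => ha

theorem coeff_pow_of_le_orderTop {x : HahnSeries Γ R} {a : Γ}
    (ha : (a : WithTop Γ) ≤ x.orderTop) (n : ℕ) : (x ^ n).coeff (n • a) = x.coeff a ^ n := by
  simpa using coeff_prod_of_le_orderTop (Finset.range n) fun _ _ => ha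

variable {σ : Type*} {g : σ → HahnSeries Γ R} {a : Γ}

theorem le_orderTop_finsuppProd_pow (hg : ∀ i, (a : WithTop Γ) ≤ (g i).orderTop)
    (s : σ →₀ ℕ) :
    ((s.degree • a : Γ) : WithTop Γ) ≤ (s.prod fun i e => g i ^ e).orderTop := by
  rw [Finsupp.degree_apply, Finset.sum_smul]
  exact le_orderTop_prod _ fun i _ => le_orderTop_pow (hg i) (s i)

theorem coeff_finsuppProd_pow (hg : ∀ i, (a : WithTop Γ) ≤ (g i).orderTop)
    (s : σ →₀ ℕ) : (s.prod fun i e => g i ^ e).coeff (s.degree • a)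
      = s.prod fun i e => (g i).coeff a ^ e := by
  rw [Finsupp.degree_apply, Finset.sum_smul, Finsupp.prod, Finsupp.prod,
    coeff_prod_of_le_orderTop _ fun i _ => le_orderTop_pow (hg i) (s i)]
  exact Finset.prod_congr rfl fun i _ => coeff_pow_of_le_orderTop (hg i) (s i)

theorem coeff_aeval (g : σ → HahnSeries Γ R) (P : MvPolynomial σ R) (m : Γ) :
    (MvPolynomial.aeval g P).coeff m
      = ∑ s ∈ P.support, P.coeff s * (s.prod fun i e => g i ^ e).coeff m := by
  conv_lhs => rw [P.as_sum]
  simp only [map_sum, MvPolynomial.aeval_monomial, coeff_sum, ← Algebra.smul_def, coeff_smul,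
    smul_eq_mul]

theorem coeff_nsmul_aeval_eq_zero_of_neg (ha : a < 0)
    (hg : ∀ i, (a : WithTop Γ) ≤ (g i).orderTop) {P : MvPolynomial σ R} {n : ℕ}
    (hP : P.totalDegree < n) : (MvPolynomial.aeval g P).coeff (n • a) = 0 := by
  rw [coeff_aeval]
  refine Finset.sum_eq_zero fun s hs => ?_
  have hlt : n • a < s.degree • a :=
    nsmul_lt_nsmul_left (M := Γᵒᵈ) ha ((MvPolynomial.le_totalDegree hs).trans_lt hP)
  rw [coeff_eq_zero_of_lt_orderTop ((WithTop.coe_lt_coe.2 hlt).trans_le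
    (le_orderTop_finsuppProd_pow hg s)), mul_zero]

theorem coeff_zero_aeval_of_pos (ha : 0 < a) (hg : ∀ i, (a : WithTop Γ) ≤ (g i).orderTop)
    (P : MvPolynomial σ R) : (MvPolynomial.aeval g P).coeff 0 = P.coeff 0 := by
  rw [coeff_aeval, Finset.sum_eq_single 0]
  · simp [coeff_one]
  · intro s _ hs
    have hpos : 0 < s.degree • a := nsmul_pos ha ((Finsupp.degree_eq_zero_iff s).not.2 hs)
    rw [coeff_eq_zero_of_lt_orderTop ((WithTop.coe_lt_coe.2 hpos).trans_le
      (le_orderTop_finsuppProd_pow hg s)), mul_zero]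
  · intro h
    rw [MvPolynomial.notMem_support_iff.1 h, zero_mul]

theorem coeff_zero_aeval_of_nonneg (hg : ∀ i, 0 ≤ (g i).orderTop) (P : MvPolynomial σ R) :
    (MvPolynomial.aeval g P).coeff 0 = MvPolynomial.aeval (fun i => (g i).coeff 0) P := by
  rw [coeff_aeval, MvPolynomial.aeval_def, Algebra.algebraMap_self, MvPolynomial.eval₂_id,
    MvPolynomial.eval_eq]
  refine Finset.sum_congr rfl fun s _ => ?_
  have hg0 : ∀ i, ((0 : Γ) : WithTop Γ) ≤ (g i).orderTop := hg
  rw [← Finsupp.prod, ← coeff_finsuppProd_pow hg0 s, nsmul_zero]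

variable {z : HahnSeries Γ R} {P : MvPolynomial σ R} {n : ℕ}

theorem nonneg_of_pow_eq_aeval [NoZeroDivisors R] (hz : (a : WithTop Γ) ≤ z.orderTop)
    (hza : z.coeff a ≠ 0) (hg : ∀ i, (a : WithTop Γ) ≤ (g i).orderTop)
    (hP : P.totalDegree < n) (h : z ^ n = MvPolynomial.aeval g P) : 0 ≤ a := by
  by_contra! ha
  have hcoeff := congrArg (coeff · (n • a)) h
  simp only [coeff_pow_of_le_orderTop hz, coeff_nsmul_aeval_eq_zero_of_neg ha hg hP] at hcoeff
  exact pow_ne_zero n hza hcoeff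

theorem nonpos_of_pow_eq_aeval (hz : (a : WithTop Γ) ≤ z.orderTop)
    (hg : ∀ i, (a : WithTop Γ) ≤ (g i).orderTop) (hn : 0 < n) (hP : P.coeff 0 ≠ 0)
    (h : z ^ n = MvPolynomial.aeval g P) : a ≤ 0 := by
  by_contra! ha
  have hpow : (z ^ n).coeff 0 = 0 := coeff_eq_zero_of_lt_orderTop <|
    (WithTop.coe_lt_coe.2 (nsmul_pos ha hn.ne')).trans_le (le_orderTop_pow hz n)
  rw [h, coeff_zero_aeval_of_pos ha hg] at hpow
  exact hP hpow

end CommSemiring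

-- Mathlib's two `R`-algebra structures on `R⟦Γ⟧` are not definitionally equal.
theorem powerSeriesAlgebra_eq_instAlgebra {Γ R : Type*} [Semiring Γ] [PartialOrder Γ]
    [IsStrictOrderedRing Γ] [CommSemiring R] :
    powerSeriesAlgebra Γ R = (instAlgebra : Algebra R (HahnSeries Γ R)) :=
  Algebra.algebra_ext _ _ fun r => by
    rw [algebraMap_apply', PowerSeries.algebraMap_apply, Algebra.algebraMap_self_apply,
      ofPowerSeries_C, algebraMap_apply, Algebra.algebraMap_self_apply]

end HahnSeries

section DHahn

open HahnSeries

variable {K : Type*} [Field K] (δ : Derivation ℤ K K) (f : K) (p : ℕ)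

theorem coeff_DHahn (z : HahnSeries ℤ K) (m : ℤ) :
    (DHahn δ f p z).coeff m
      = δ (z.coeff m) + (((p : ℤ) - m : ℤ) : K) / (p : K) * f * z.coeff (m - p) := rfl

theorem le_orderTop_iterate_DHahn {d : ℤ} {z : HahnSeries ℤ K}
    (hz : (d : WithTop ℤ) ≤ z.orderTop) (i : ℕ) :
    (d : WithTop ℤ) ≤ ((DHahn δ f p)^[i] z).orderTop := by
  induction i with
  | zero => exact hz
  | succ i ih =>
    rw [Function.iterate_succ_apply', le_orderTop_iff_forall]
    rw [le_orderTop_iff_forall] at ih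
    intro m hm
    have hm : m < d := WithTop.coe_lt_coe.1 hm
    have hmp : m - p < d := by omega
    rw [coeff_DHahn, ih m (by exact_mod_cast hm), ih (m - p) (by exact_mod_cast hmp), map_zero,
      mul_zero, zero_add]

variable {p}

theorem coeff_iterate_DHahn_of_le_orderTop (hp : 0 < p) {d : ℤ} {z : HahnSeries ℤ K}
    (hz : (d : WithTop ℤ) ≤ z.orderTop) (i : ℕ) :
    ((DHahn δ f p)^[i] z).coeff d = δ^[i] (z.coeff d) := by
  induction i with
  | zero => rfl
  | succ i ih =>
    have hlow := le_orderTop_iff_forall.1 (le_orderTop_iterate_DHahn δ f p hz i)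
    rw [Function.iterate_succ_apply', Function.iterate_succ_apply', coeff_DHahn, ih,
      hlow (d - p) (by exact_mod_cast (by omega : d - p < d)), mul_zero, add_zero]

end DHahn

theorem statement15_general {K : Type*} [Field K] (δ : Derivation ℤ K K)
    (f : K) (p : ℕ) (hp : 0 < p) (n : ℕ)
    (Q : MvPolynomial ℕ K) (hdeg : Q.totalDegree < n)
    (hT0 : MvPolynomial.coeff 0 Q ≠ 0)
    (z : HahnSeries ℤ K) (hz : z ≠ 0)
    (hsol : z ^ n = MvPolynomial.aeval (fun i => (DHahn δ f p)^[i] z) Q) :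
    (∀ m : ℤ, m < 0 → z.coeff m = 0) ∧ z.coeff 0 ≠ 0 ∧
      (z.coeff 0) ^ n = MvPolynomial.aeval (fun i => δ^[i] (z.coeff 0)) Q := by
  rw [HahnSeries.powerSeriesAlgebra_eq_instAlgebra] at hsol
  have hz_order : (z.order : WithTop ℤ) ≤ z.orderTop :=
    (HahnSeries.order_eq_orderTop_of_ne_zero hz).le
  have hz_lead : z.coeff z.order ≠ 0 := HahnSeries.coeff_order_eq_zero.not.2 hz
  have hg := le_orderTop_iterate_DHahn δ f p hz_order
  have hord : z.order = 0 := le_antisymm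
    (HahnSeries.nonpos_of_pow_eq_aeval hz_order hg (Nat.zero_lt_of_lt hdeg) hT0 hsol)
    (HahnSeries.nonneg_of_pow_eq_aeval hz_order hz_lead hg hdeg hsol)
  rw [hord] at hz_order hz_lead hg
  refine ⟨fun m hm => HahnSeries.coeff_eq_zero_of_lt_order (hord ▸ hm), hz_lead, ?_⟩
  calc z.coeff 0 ^ n = (z ^ n).coeff 0 := by
        rw [← HahnSeries.coeff_pow_of_le_orderTop hz_order n, nsmul_zero]
    _ = MvPolynomial.aeval (fun i => ((DHahn δ f p)^[i] z).coeff 0) Q := by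
        rw [hsol, HahnSeries.coeff_zero_aeval_of_nonneg hg]
    _ = MvPolynomial.aeval (fun i => δ^[i] (z.coeff 0)) Q := by
        simp_rw [coeff_iterate_DHahn_of_le_orderTop δ f hp hz_order]

/-- Key step of Rosenlicht's theorem for generalized extensions by integral:
if `T = u^n − Q` (`deg Q < n`) has nonzero constant term and a descending
Puiseux series `z ≠ 0` in an integral `θ` over `K` formally satisfies
`u^n = Q(u, u', …)`, then the leading exponent of `z` is `0` and its leading
coefficient `z_0 ∈ K` satisfies `z_0^n = Q(z_0, z_0', …)` in `K`. -/
theorem statement15 {K : Type*} [Field K] [CharZero K] (δ : Derivation ℤ K K)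
    (f : K) (p : ℕ) (hp : 0 < p) (n : ℕ) (hn : 0 < n)
    (Q : MvPolynomial ℕ K) (hdeg : Q.totalDegree < n)
    (hT0 : MvPolynomial.coeff 0 Q ≠ 0)
    (z : HahnSeries ℤ K) (hz : z ≠ 0)
    (hsol : z ^ n = MvPolynomial.aeval (fun i => (DHahn δ f p)^[i] z) Q) :
    (∀ m : ℤ, m < 0 → z.coeff m = 0) ∧ z.coeff 0 ≠ 0 ∧
      (z.coeff 0) ^ n = MvPolynomial.aeval (fun i => δ^[i] (z.coeff 0)) Q :=
  statement15_general δ f p hp n Q hdeg hT0 z hz hsol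
end

section
/- Define the ξ-weighted degree of a monomial x_0^{p_0} x_1^{p_1} ⋯ x_n^{p_n} to be Σ_{i=0}^{n} i·p_i. Let P(x_0, …, x_n) be a homogeneous polynomial of degree m over a differential field K such that the sum of the coefficients of all monomials of P of maximal ξ-weighted degree is nonzero. Then the generalized Riccati equation P(D_0(u), D_1(u), …, D_n(u)) = 0, written as an equation u^N = Q(u, u', …) with N the maximal ξ-weighted degree, has the form covered by Rosenlicht's theorem: the degree-N part in u (as the highest power of u) has nonzero coefficient and Q has total degree less than N. -/
/-!
Each `D_k` is `u^k` plus terms of total degree `< k`: the derivation `u^{(i)} ↦ u^{(i+1)}`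
does not raise the total degree, and multiplying by `u` raises it by exactly one. Hence
substituting `x_i ↦ D_i(u)` turns a monomial `x^p` into `u^{ξ(p)}` plus lower terms, and in
`P(D_0(u), …, D_n(u))` the only contributions of total degree `N` are `coeff_p · u^N` for the
monomials with `ξ(p) = N`; their sum `c` is nonzero, so dividing by `c` gives `u^N - Q`.
-/


open MvPolynomial

/-- The derivation on the differential polynomial ring `ℤ{u}`, `u^{(i)} ↦ u^{(i+1)}`. -/
noncomputable def shiftD : Derivation ℤ (MvPolynomial ℕ ℤ) (MvPolynomial ℕ ℤ) :=
  MvPolynomial.mkDerivation ℤ (fun i => MvPolynomial.X (i + 1))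

/-- The differential polynomials `D_0 = 1`, `D_{k+1} = D_k' + u·D_k`. -/
noncomputable def Dpoly : ℕ → MvPolynomial ℕ ℤ
  | 0 => 1
  | k + 1 => shiftD (Dpoly k) + MvPolynomial.X 0 * Dpoly k

/-- The ξ-weighted degree of the monomial `x_0^{p_0} ⋯ x_n^{p_n}`, namely
`Σ_{i=0}^{n} i·p_i`. -/
def xiDeg {n : ℕ} (d : Fin (n + 1) →₀ ℕ) : ℕ := ∑ i : Fin (n + 1), (i : ℕ) * d i

namespace MvPolynomial

variable {σ R : Type*}

section CommSemiring

variable [CommSemiring R]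

variable (σ R) in
/-- Unlike `p.totalDegree < N`, this is meaningful for `N = 0`, where it forces `p = 0`. -/
noncomputable def restrictTotalDegreeLT (N : ℕ) : Submodule R (MvPolynomial σ R) :=
  restrictSupport R {d | d.degree < N}

theorem mem_restrictTotalDegreeLT_iff {N : ℕ} {p : MvPolynomial σ R} :
    p ∈ restrictTotalDegreeLT σ R N ↔ ∀ d ∈ p.support, d.degree < N :=
  mem_restrictSupport_iff R

theorem mem_restrictTotalDegreeLT_iff_totalDegree_lt {N : ℕ} (hN : 0 < N)
    {p : MvPolynomial σ R} : p ∈ restrictTotalDegreeLT σ R N ↔ p.totalDegree < N := by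
  rw [mem_restrictTotalDegreeLT_iff, totalDegree, Finset.sup_lt_iff (show ⊥ < N from hN)]
  rfl

theorem restrictTotalDegreeLT_mono {M N : ℕ} (h : M ≤ N) :
    restrictTotalDegreeLT σ R M ≤ restrictTotalDegreeLT σ R N :=
  restrictSupport_mono R fun _ hd => lt_of_lt_of_le hd h

theorem totalDegree_le_of_mem_restrictTotalDegreeLT {N : ℕ} {p : MvPolynomial σ R}
    (hp : p ∈ restrictTotalDegreeLT σ R N) : p.totalDegree ≤ N :=
  Finset.sup_le fun d hd => (mem_restrictTotalDegreeLT_iff.1 hp d hd).le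

theorem mul_mem_restrictTotalDegreeLT {a b : ℕ} {p F : MvPolynomial σ R}
    (hp : p.totalDegree ≤ a) (hF : F ∈ restrictTotalDegreeLT σ R b) :
    p * F ∈ restrictTotalDegreeLT σ R (a + b) := by
  have hp' : p ∈ restrictSupport R {d : σ →₀ ℕ | d.degree ≤ a} :=
    (mem_restrictTotalDegree σ _ p).2 hp
  have := Submodule.mul_mem_mul hp' hF
  unfold restrictTotalDegreeLT at this ⊢
  rw [← restrictSupport_add] at this
  refine restrictSupport_mono R ?_ this
  rw [Set.add_subset_iff]
  intro x hx y hy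
  simp only [Set.mem_ofPred_eq, map_add] at hx hy ⊢
  omega

theorem totalDegree_mkDerivation_monomial_le (f : σ → MvPolynomial σ R)
    (hf : ∀ i, (f i).totalDegree ≤ 1) (s : σ →₀ ℕ) (r : R) :
    (mkDerivation R f (monomial s r)).totalDegree ≤ s.degree := by
  rw [mkDerivation_monomial]
  refine (totalDegree_smul_le _ _).trans (totalDegree_finsetSum_le fun i hi => ?_)
  have hsplit : (s - Finsupp.single i 1).degree + 1 = s.degree := by
    have hle : Finsupp.single i 1 ≤ s :=
      Finsupp.single_le_iff.2 (Nat.one_le_iff_ne_zero.2 (Finsupp.mem_support_iff.1 hi))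
    simpa only [map_add, Finsupp.degree_single] using
      congrArg Finsupp.degree (tsub_add_cancel_of_le hle)
  calc (monomial (s - Finsupp.single i 1) (s i : R) • f i).totalDegree
      ≤ (monomial (s - Finsupp.single i 1) (s i : R)).totalDegree + (f i).totalDegree :=
        totalDegree_mul _ _
    _ ≤ (s - Finsupp.single i 1).degree + 1 := add_le_add (totalDegree_monomial_le _ _) (hf i)
    _ = s.degree := hsplit

theorem totalDegree_mkDerivation_le (f : σ → MvPolynomial σ R)
    (hf : ∀ i, (f i).totalDegree ≤ 1) (p : MvPolynomial σ R) :
    (mkDerivation R f p).totalDegree ≤ p.totalDegree := by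
  conv_lhs => rw [p.as_sum, map_sum]
  exact totalDegree_finsetSum_le fun s hs =>
    (totalDegree_mkDerivation_monomial_le f hf s _).trans (le_totalDegree hs)

theorem map_mem_restrictTotalDegreeLT {S : Type*} [CommSemiring S] (g : R →+* S) {N : ℕ}
    {p : MvPolynomial σ R} (hp : p ∈ restrictTotalDegreeLT σ R N) :
    map g p ∈ restrictTotalDegreeLT σ S N :=
  mem_restrictTotalDegreeLT_iff.2 fun d hd =>
    mem_restrictTotalDegreeLT_iff.1 hp d (support_map_subset g p hd)

end CommSemiring

section CommRing

variable [CommRing R]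

theorem totalDegree_le_of_sub_mem_restrictTotalDegreeLT {a : ℕ} {p h : MvPolynomial σ R}
    (hh : h.totalDegree ≤ a) (hp : p - h ∈ restrictTotalDegreeLT σ R a) :
    p.totalDegree ≤ a := by
  rw [← add_sub_cancel h p]
  exact (totalDegree_add _ _).trans
    (max_le hh (totalDegree_le_of_mem_restrictTotalDegreeLT hp))

theorem mul_sub_mul_mem_restrictTotalDegreeLT {a b : ℕ} {p q h k : MvPolynomial σ R}
    (hh : h.totalDegree ≤ a) (hk : k.totalDegree ≤ b)
    (hp : p - h ∈ restrictTotalDegreeLT σ R a) (hq : q - k ∈ restrictTotalDegreeLT σ R b) :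
    p * q - h * k ∈ restrictTotalDegreeLT σ R (a + b) := by
  have hkp := mul_mem_restrictTotalDegreeLT hk hp
  rw [add_comm] at hkp
  rw [show p * q - h * k = h * (q - k) + k * (p - h) + (p - h) * (q - k) by ring]
  exact add_mem (add_mem (mul_mem_restrictTotalDegreeLT hh hq) hkp)
    (mul_mem_restrictTotalDegreeLT (totalDegree_le_of_mem_restrictTotalDegreeLT hp) hq)

theorem pow_sub_pow_mem_restrictTotalDegreeLT {a : ℕ} {p h : MvPolynomial σ R}
    (hh : h.totalDegree ≤ a) (hp : p - h ∈ restrictTotalDegreeLT σ R a) (n : ℕ) :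
    p ^ n - h ^ n ∈ restrictTotalDegreeLT σ R (n * a) := by
  induction n with
  | zero => simp
  | succ n ih =>
    rw [pow_succ, pow_succ, add_mul, one_mul]
    exact mul_sub_mul_mem_restrictTotalDegreeLT
      ((totalDegree_pow h n).trans (Nat.mul_le_mul_left n hh)) hh ih hp

theorem prod_sub_prod_mem_restrictTotalDegreeLT {ι : Type*} (s : Finset ι)
    {p h : ι → MvPolynomial σ R} {a : ι → ℕ} (hh : ∀ i ∈ s, (h i).totalDegree ≤ a i)
    (hp : ∀ i ∈ s, p i - h i ∈ restrictTotalDegreeLT σ R (a i)) :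
    ∏ i ∈ s, p i - ∏ i ∈ s, h i ∈ restrictTotalDegreeLT σ R (∑ i ∈ s, a i) := by
  classical
  induction s using Finset.cons_induction with
  | empty => simp
  | cons i s hi ih =>
    simp only [Finset.prod_cons, Finset.sum_cons]
    refine mul_sub_mul_mem_restrictTotalDegreeLT (hh i (Finset.mem_cons_self i s))
      ((totalDegree_finsetProd _ _).trans (Finset.sum_le_sum fun j hj =>
        hh j (Finset.mem_cons_of_mem hj))) (hp i (Finset.mem_cons_self i s))
      (ih (fun j hj => hh j (Finset.mem_cons_of_mem hj))
        (fun j hj => hp j (Finset.mem_cons_of_mem hj)))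

theorem prod_pow_sub_X_pow_mem_restrictTotalDegreeLT {ι : Type*} [Fintype ι]
    {f : ι → MvPolynomial σ R} {w : ι → ℕ} {j : σ}
    (hf : ∀ i, f i - X j ^ w i ∈ restrictTotalDegreeLT σ R (w i)) (d : ι →₀ ℕ) :
    ∏ i, f i ^ d i - X j ^ (∑ i, w i * d i) ∈
      restrictTotalDegreeLT σ R (∑ i, w i * d i) := by
  have hX : ∀ i, ((X j : MvPolynomial σ R) ^ w i).totalDegree ≤ w i := fun i => by
    rw [X_pow_eq_monomial]
    exact (totalDegree_monomial_le _ _).trans (by simp)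
  have := prod_sub_prod_mem_restrictTotalDegreeLT Finset.univ
    (fun i _ => (totalDegree_pow _ (d i)).trans (Nat.mul_le_mul_left (d i) (hX i)))
    (fun i _ => pow_sub_pow_mem_restrictTotalDegreeLT (hX i) (hf i) (d i))
  simpa only [← pow_mul, Finset.prod_pow_eq_pow_sum, mul_comm] using this

theorem aeval_sub_C_mul_X_pow_mem_restrictTotalDegreeLT {ι : Type*} [Fintype ι]
    {f : ι → MvPolynomial σ R} {w : ι → ℕ} {j : σ}
    (hf : ∀ i, f i - X j ^ w i ∈ restrictTotalDegreeLT σ R (w i)) (P : MvPolynomial ι R)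
    {N : ℕ} (hN : ∀ d ∈ P.support, ∑ i, w i * d i ≤ N) :
    aeval f P - C (∑ d ∈ P.support with ∑ i, w i * d i = N, P.coeff d) * X j ^ N ∈
      restrictTotalDegreeLT σ R N := by
  classical
  have hlower : ∀ d ∈ P.support,
      C (P.coeff d) * (∏ i, f i ^ d i - X j ^ (∑ i, w i * d i)) ∈ restrictTotalDegreeLT σ R N :=
    fun d hd => by
      rw [C_mul']
      exact Submodule.smul_mem _ _ (restrictTotalDegreeLT_mono (hN d hd)
        (prod_pow_sub_X_pow_mem_restrictTotalDegreeLT hf d))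
  rw [aeval_def, eval₂_eq', algebraMap_eq, Finset.sum_filter, map_sum, Finset.sum_mul,
    ← Finset.sum_sub_distrib]
  refine Submodule.sum_mem _ fun d hd => ?_
  split_ifs with h
  · rw [← mul_sub]
    simpa only [h] using hlower d hd
  · rw [map_zero, zero_mul, sub_zero, show C (P.coeff d) * ∏ i, f i ^ d i =
      C (P.coeff d) * X j ^ (∑ i, w i * d i) +
        C (P.coeff d) * (∏ i, f i ^ d i - X j ^ (∑ i, w i * d i)) by ring,
      C_mul_X_pow_eq_monomial]
    refine add_mem ((monomial_mem_restrictSupport R).2 (Or.inl ?_)) (hlower d hd)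
    simpa using lt_of_le_of_ne (hN d hd) h

end CommRing

end MvPolynomial

theorem totalDegree_shiftD_le (p : MvPolynomial ℕ ℤ) : (shiftD p).totalDegree ≤ p.totalDegree :=
  totalDegree_mkDerivation_le _ (fun i => (totalDegree_X (i + 1)).le) p

theorem Dpoly_sub_X_pow_mem_restrictTotalDegreeLT (k : ℕ) :
    Dpoly k - X 0 ^ k ∈ restrictTotalDegreeLT ℕ ℤ k := by
  induction k with
  | zero => simp [Dpoly]
  | succ k ih =>
    have hdeg : (Dpoly k).totalDegree ≤ k :=
      totalDegree_le_of_sub_mem_restrictTotalDegreeLT (totalDegree_X_pow 0 k).le ih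
    have hX := mul_mem_restrictTotalDegreeLT (totalDegree_X (R := ℤ) 0).le ih
    rw [add_comm] at hX
    rw [show Dpoly (k + 1) - X 0 ^ (k + 1) = shiftD (Dpoly k) + X 0 * (Dpoly k - X 0 ^ k) by
      rw [Dpoly]; ring]
    exact add_mem ((mem_restrictTotalDegreeLT_iff_totalDegree_lt k.succ_pos).2
      ((totalDegree_shiftD_le _).trans_lt (Nat.lt_succ_of_le hdeg))) hX

theorem statement18_general {K : Type*} [Field K] (n N : ℕ)
    (P : MvPolynomial (Fin (n + 1)) K)
    (hN : N = P.support.sup xiDeg) (hNpos : 0 < N)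
    (hcond : (∑ d ∈ P.support.filter (fun d => xiDeg d = N), P.coeff d) ≠ 0) :
    ∃ Q : MvPolynomial ℕ K, Q.totalDegree < N ∧
      MvPolynomial.aeval
          (fun i : Fin (n + 1) => MvPolynomial.map (Int.castRingHom K) (Dpoly i)) P =
        MvPolynomial.C (∑ d ∈ P.support.filter (fun d => xiDeg d = N), P.coeff d) *
          (MvPolynomial.X 0 ^ N - Q) := by
  set c := ∑ d ∈ P.support.filter (fun d => xiDeg d = N), P.coeff d
  set A := aeval (fun i : Fin (n + 1) => map (Int.castRingHom K) (Dpoly i)) P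
  have hD : ∀ i : Fin (n + 1), map (Int.castRingHom K) (Dpoly i) - X 0 ^ (i : ℕ) ∈
      restrictTotalDegreeLT ℕ K i := fun i => by
    simpa using map_mem_restrictTotalDegreeLT (Int.castRingHom K)
      (Dpoly_sub_X_pow_mem_restrictTotalDegreeLT i)
  have hA : A - C c * X 0 ^ N ∈ restrictTotalDegreeLT ℕ K N :=
    aeval_sub_C_mul_X_pow_mem_restrictTotalDegreeLT hD P fun d hd =>
      hN ▸ Finset.le_sup (f := xiDeg) hd
  refine ⟨X 0 ^ N - C c⁻¹ * A, ?_, ?_⟩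
  · have hQ : X 0 ^ N - C c⁻¹ * A = C (-c⁻¹) * (A - C c * X 0 ^ N) := by
      rw [mul_sub, ← mul_assoc, ← C_mul, neg_mul, inv_mul_cancel₀ hcond, map_neg, map_neg, C_1]
      ring
    rw [← mem_restrictTotalDegreeLT_iff_totalDegree_lt hNpos, hQ, C_mul']
    exact Submodule.smul_mem _ _ hA
  · rw [sub_sub_cancel, ← mul_assoc, ← C_mul, mul_inv_cancel₀ hcond, C_1, one_mul]

/-- Let `P(x_0, …, x_n)` be homogeneous of degree `m` over `K`, `N > 0` its
maximal ξ-weighted degree, and suppose the sum `c` of the coefficients of the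
monomials of maximal ξ-weighted degree is nonzero. Then the generalized Riccati
equation `P(D_0(u), …, D_n(u)) = 0` has the form covered by Rosenlicht's
theorem: `P(D_0(u), …, D_n(u)) = c·(u^N − Q)` where the differential polynomial
`Q` has total degree `< N`. -/
theorem statement18 {K : Type*} [Field K] [CharZero K] (n m N : ℕ)
    (P : MvPolynomial (Fin (n + 1)) K) (hhom : P.IsHomogeneous m)
    (hN : N = P.support.sup xiDeg) (hNpos : 0 < N)
    (hcond : (∑ d ∈ P.support.filter (fun d => xiDeg d = N), P.coeff d) ≠ 0) :
    ∃ Q : MvPolynomial ℕ K, Q.totalDegree < N ∧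
      MvPolynomial.aeval
          (fun i : Fin (n + 1) => MvPolynomial.map (Int.castRingHom K) (Dpoly i)) P =
        MvPolynomial.C (∑ d ∈ P.support.filter (fun d => xiDeg d = N), P.coeff d) *
          (MvPolynomial.X 0 ^ N - Q) :=
  statement18_general n N P hN hNpos hcond
end

section
/- Assume Rosenlicht's theorem: if u^n = Q(u, u', u'', …) with Q a differential polynomial over a differential field K of total degree less than n has a solution representable by generalized quadratures over K, then it has a solution algebraic over K. Deduce: if the linear equation y^{(n)} + a_1 y^{(n-1)} + … + a_n y = 0 (a_i ∈ K) has a nonzero solution representable by generalized quadratures over K, then it has a solution of the form y_1 = exp(z) where z' is algebraic over K. -/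
/-- One step of a tower of extensions by generalized quadratures inside an
ambient differential field `F`. -/
def GQStep {F : Type*} [Field F] (δ : Derivation ℤ F F) (E E' : Subfield F) : Prop :=
  (∀ x ∈ E', δ x ∈ E') ∧
  ∃ t : F, (IsAlgebraic ↥E t ∨ δ t ∈ E ∨ ∃ f ∈ E, δ t = f * t) ∧
    E' = Subfield.closure (↑E ∪ {t})

/-- `z` is representable by generalized quadratures over `K`. -/
def RepGQ {F : Type*} [Field F] (δ : Derivation ℤ F F) (K : Subfield F) (z : F) : Prop :=
  ∃ (m : ℕ) (E : ℕ → Subfield F), E 0 = K ∧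
    (∀ i < m, GQStep δ (E i) (E (i + 1))) ∧ z ∈ E m

/-- The linear differential operator `L(y) = y^{(n)} + a_1·y^{(n-1)} + … + a_n·y`. -/
noncomputable def Lop {F : Type*} [Field F] (δ : Derivation ℤ F F) (n : ℕ)
    (a : ℕ → F) (y : F) : F :=
  δ^[n] y + ∑ i ∈ Finset.range n, a (i + 1) * δ^[n - (i + 1)] y

/-!
Writing `u = y'/y`, every derivative of `y` has the form `y^{(k)} = D_k(u) · y`, where
`D_0 = 1`, `D_{k+1} = D_k' + u D_k` is a differential polynomial with integer coefficients,
and `D_k - u^k` has total degree `< k`. Hence `L(y) = (D_n + a_1 D_{n-1} + ⋯ + a_n)(u) · y`,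
so `L(y) = 0` with `y ≠ 0` says that `u` solves a Riccati equation `u^n = Q(u, u', …)` with
`deg Q < n`; `u` is representable by generalized quadratures along with `y`. Rosenlicht's
theorem yields an algebraic solution `g`, and any `y₁ ≠ 0` with `y₁' = g y₁` solves `L(y₁) = 0`.
-/

open MvPolynomial Finset

namespace MvPolynomial

variable {R : Type*} [CommSemiring R]

theorem totalDegree_map_le {σ S : Type*} [CommSemiring S] (f : R →+* S) (p : MvPolynomial σ R) :
    (map f p).totalDegree ≤ p.totalDegree :=
  Finset.sup_mono (support_map_subset f p)

theorem totalDegree_X_le {σ : Type*} (i : σ) : (X i : MvPolynomial σ R).totalDegree ≤ 1 :=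
  (totalDegree_monomial_le _ _).trans_eq (Finsupp.sum_single_index rfl)

/-- The derivation of differential polynomials in one indeterminate, `X i` standing for its
`i`-th derivative. -/
noncomputable def shiftDerivation : Derivation R (MvPolynomial ℕ R) (MvPolynomial ℕ R) :=
  mkDerivation R fun i => X (i + 1)

@[simp]
theorem shiftDerivation_X (i : ℕ) : shiftDerivation (X i : MvPolynomial ℕ R) = X (i + 1) :=
  mkDerivation_X _ _ _

theorem totalDegree_shiftDerivation_monomial_le (s : ℕ →₀ ℕ) (r : R) :
    (shiftDerivation (monomial s r)).totalDegree ≤ s.degree := by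
  rw [shiftDerivation, mkDerivation_monomial, Finsupp.sum]
  refine (totalDegree_smul_le _ _).trans (totalDegree_finsetSum_le fun i hi => ?_)
  have hle : Finsupp.single i 1 ≤ s :=
    Finsupp.single_le_iff.2 (Nat.one_le_iff_ne_zero.2 (Finsupp.mem_support_iff.1 hi))
  calc (monomial (s - Finsupp.single i 1) (s i : R) • X (i + 1)).totalDegree
      ≤ (s - Finsupp.single i 1).degree + (Finsupp.single (i + 1) 1).degree := by
        rw [smul_eq_mul, X]
        exact (totalDegree_mul _ _).trans
          (add_le_add (totalDegree_monomial_le _ _) (totalDegree_monomial_le _ _))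
    _ = (s - Finsupp.single i 1 + Finsupp.single i 1).degree := by
        simp only [map_add, Finsupp.degree_single]
    _ = s.degree := by rw [tsub_add_cancel_of_le hle]

theorem totalDegree_shiftDerivation_le (p : MvPolynomial ℕ R) :
    (shiftDerivation p).totalDegree ≤ p.totalDegree := by
  conv_lhs => rw [p.as_sum, map_sum]
  exact totalDegree_finsetSum_le fun s hs =>
    (totalDegree_shiftDerivation_monomial_le s _).trans (le_totalDegree hs)

theorem aeval_iterate_shiftDerivation {A : Type*} [CommRing A] [Algebra R A]
    (δ : Derivation R A A) (u : A) (p : MvPolynomial ℕ R) :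
    aeval (fun i => δ^[i] u) (shiftDerivation p) = δ (aeval (fun i => δ^[i] u) p) := by
  induction p using MvPolynomial.induction_on with
  | C r => simp [shiftDerivation]
  | add p q hp hq => simp only [map_add, hp, hq]
  | mul_X p i hp =>
    simp only [Derivation.leibniz, smul_eq_mul, map_add, map_mul, hp, aeval_X, shiftDerivation_X,
      Function.iterate_succ_apply']

variable (R) in
/-- `riccatiPoly R k` is the paper's `D_k`: `y^{(k)} = D_k(y'/y) · y`. -/
noncomputable def riccatiPoly : ℕ → MvPolynomial ℕ R
  | 0 => 1
  | k + 1 => shiftDerivation (riccatiPoly k) + X 0 * riccatiPoly k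

theorem iterate_eq_aeval_riccatiPoly_mul {A : Type*} [CommRing A] [Algebra R A]
    (δ : Derivation R A A) {u y : A} (h : δ y = u * y) (k : ℕ) :
    δ^[k] y = aeval (fun i => δ^[i] u) (riccatiPoly R k) * y := by
  induction k with
  | zero => simp [riccatiPoly]
  | succ k ih =>
    rw [Function.iterate_succ_apply', ih, Derivation.leibniz, smul_eq_mul, smul_eq_mul, h,
      riccatiPoly, map_add, map_mul, aeval_iterate_shiftDerivation, aeval_X,
      Function.iterate_zero_apply]
    ring

theorem totalDegree_riccatiPoly_le (k : ℕ) : (riccatiPoly R k).totalDegree ≤ k := by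
  induction k with
  | zero => simp [riccatiPoly]
  | succ k ih =>
    refine (totalDegree_add _ _).trans (max_le ?_ ?_)
    · exact (totalDegree_shiftDerivation_le _).trans (ih.trans k.le_succ)
    · exact (totalDegree_mul _ _).trans (by linarith [totalDegree_X_le (R := R) 0])

theorem totalDegree_riccatiPoly_sub_X_pow_lt {R : Type*} [CommRing R] {k : ℕ} (hk : 0 < k) :
    (riccatiPoly R k - X 0 ^ k).totalDegree < k := by
  induction k, hk using Nat.le_induction with
  | base => simp [riccatiPoly]
  | succ k hk ih =>
    have hsplit : riccatiPoly R (k + 1) - X 0 ^ (k + 1) =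
        shiftDerivation (riccatiPoly R k) + X 0 * (riccatiPoly R k - X 0 ^ k) := by
      rw [riccatiPoly]; ring
    rw [hsplit]
    refine (totalDegree_add _ _).trans_lt (max_lt ?_ ?_)
    · exact ((totalDegree_shiftDerivation_le _).trans (totalDegree_riccatiPoly_le k)).trans_lt
        k.lt_succ_self
    · exact (totalDegree_mul _ _).trans_lt (by linarith [totalDegree_X_le (R := R) 0])

end MvPolynomial

section LinearEquation

variable {R : Type*} [CommRing R]

/-- The generalized Riccati polynomial `D_n + c_1 D_{n-1} + ⋯ + c_n` of `Lop`. -/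
noncomputable def lopRiccatiPoly (n : ℕ) (c : ℕ → R) : MvPolynomial ℕ R :=
  map (algebraMap ℤ R) (riccatiPoly ℤ n) +
    ∑ i ∈ range n, C (c (i + 1)) * map (algebraMap ℤ R) (riccatiPoly ℤ (n - (i + 1)))

theorem totalDegree_lopRiccatiPoly_sub_X_pow_lt {n : ℕ} (hn : 0 < n) (c : ℕ → R) :
    (lopRiccatiPoly n c - X 0 ^ n).totalDegree < n := by
  have hsplit : lopRiccatiPoly n c - X 0 ^ n = map (algebraMap ℤ R) (riccatiPoly ℤ n - X 0 ^ n) +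
      ∑ i ∈ range n, C (c (i + 1)) * map (algebraMap ℤ R) (riccatiPoly ℤ (n - (i + 1))) := by
    rw [lopRiccatiPoly, map_sub, map_pow, map_X]; ring
  rw [hsplit]
  refine (totalDegree_add _ _).trans_lt (max_lt ?_ ?_)
  · exact (totalDegree_map_le _ _).trans_lt (totalDegree_riccatiPoly_sub_X_pow_lt hn)
  · refine (totalDegree_finsetSum_le (d := n - 1) fun i hi => ?_).trans_lt (by omega)
    rw [Finset.mem_range] at hi
    refine (totalDegree_mul _ _).trans ?_
    rw [totalDegree_C, zero_add]
    exact ((totalDegree_map_le _ _).trans (totalDegree_riccatiPoly_le _)).trans (by omega)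

theorem Lop_eq_aeval_lopRiccatiPoly_mul {F : Type*} [Field F] [Algebra R F]
    (δ : Derivation ℤ F F) (n : ℕ) (c : ℕ → R) {u y : F} (h : δ y = u * y) :
    Lop δ n (fun i => algebraMap R F (c i)) y =
      aeval (fun i => δ^[i] u) (lopRiccatiPoly n c) * y := by
  simp only [Lop, lopRiccatiPoly, iterate_eq_aeval_riccatiPoly_mul δ h, map_add, map_sum, map_mul,
    aeval_C, aeval_map_algebraMap, add_mul, sum_mul, mul_assoc]

end LinearEquation

theorem RepGQ.deriv_div_self {F : Type*} [Field F] {δ : Derivation ℤ F F} {K : Subfield F}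
    (hK : ∀ x ∈ K, δ x ∈ K) {y : F} (hy : RepGQ δ K y) : RepGQ δ K (δ y / y) := by
  obtain ⟨m, E, hE0, hstep, hyE⟩ := hy
  have hclosed : ∀ x ∈ E m, δ x ∈ E m := by
    cases m with
    | zero => exact hE0 ▸ hK
    | succ m => exact (hstep m m.lt_succ_self).1
  exact ⟨m, E, hE0, hstep, div_mem (hclosed y hyE) hyE⟩

theorem statement19_general {F : Type*} [Field F] (δ : Derivation ℤ F F)
    (K : Subfield F) (hK : ∀ x ∈ K, δ x ∈ K)
    (hexp : ∀ g : F, ∃ w : F, w ≠ 0 ∧ δ w = g * w)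
    (hRos : ∀ N : ℕ, 0 < N → ∀ Q : MvPolynomial ℕ ↥K, Q.totalDegree < N →
      (∃ u : F, RepGQ δ K u ∧
        u ^ N = MvPolynomial.aeval (fun i => δ^[i] u) Q) →
      ∃ w : F, IsAlgebraic ↥K w ∧
        w ^ N = MvPolynomial.aeval (fun i => δ^[i] w) Q)
    (n : ℕ) (hn : 0 < n) (a : ℕ → F) (ha : ∀ i, a i ∈ K)
    (y : F) (hy : y ≠ 0) (hsol : Lop δ n a y = 0) (hrep : RepGQ δ K y) :
    ∃ y₁ : F, y₁ ≠ 0 ∧ Lop δ n a y₁ = 0 ∧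
      ∃ g : F, IsAlgebraic ↥K g ∧ δ y₁ = g * y₁ := by
  let c : ℕ → K := fun i => ⟨a i, ha i⟩
  have hLop : ∀ {u z : F}, δ z = u * z →
      Lop δ n a z = aeval (fun i => δ^[i] u) (lopRiccatiPoly n c) * z :=
    Lop_eq_aeval_lopRiccatiPoly_mul δ n c
  have hriccati : ∀ u : F, u ^ n = aeval (fun i => δ^[i] u) (X 0 ^ n - lopRiccatiPoly n c) ↔
      aeval (fun i => δ^[i] u) (lopRiccatiPoly n c) = 0 := fun u => by
    rw [map_sub, map_pow, aeval_X, Function.iterate_zero_apply, eq_comm, sub_eq_self]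
  have hdeg : (X 0 ^ n - lopRiccatiPoly n c).totalDegree < n := by
    rw [← totalDegree_neg, neg_sub]
    exact totalDegree_lopRiccatiPoly_sub_X_pow_lt hn c
  have hu : δ y = δ y / y * y := (div_mul_cancel₀ _ hy).symm
  have hu_riccati : aeval (fun i => δ^[i] (δ y / y)) (lopRiccatiPoly n c) = 0 :=
    (mul_eq_zero.1 (hLop hu ▸ hsol)).resolve_right hy
  obtain ⟨g, hg_alg, hg⟩ := hRos n hn _ hdeg
    ⟨δ y / y, hrep.deriv_div_self hK, (hriccati _).2 hu_riccati⟩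
  obtain ⟨y₁, hy₁, hy₁g⟩ := hexp g
  exact ⟨y₁, hy₁, by rw [hLop hy₁g, (hriccati g).1 hg, zero_mul], g, hg_alg, hy₁g⟩

/-- Assume Rosenlicht's theorem (`hRos`): if `u^N = Q(u, u', …)` with
`deg Q < N` over `K` has a solution representable by generalized quadratures
over `K`, then it has a solution algebraic over `K`. Then if the linear equation
`y^{(n)} + a_1 y^{(n-1)} + … + a_n y = 0` (`a_i ∈ K`) has a nonzero solution
representable by generalized quadratures over `K`, it has a solution of the form
`y₁ = exp(z)` with `z'` algebraic over `K`, i.e. a nonzero solution `y₁` with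
`y₁' = g·y₁` for some `g` algebraic over `K`. (`hexp` guarantees the ambient
field `F` contains exponentials of integrals.) -/
theorem statement19 {F : Type*} [Field F] [Algebra ℂ F] (δ : Derivation ℤ F F)
    (K : Subfield F) (hK : ∀ x ∈ K, δ x ∈ K)
    (hconst : ∀ x : F, δ x = 0 ↔ ∃ c : ℂ, x = algebraMap ℂ F c)
    (hexp : ∀ g : F, ∃ w : F, w ≠ 0 ∧ δ w = g * w)
    (hRos : ∀ N : ℕ, 0 < N → ∀ Q : MvPolynomial ℕ ↥K, Q.totalDegree < N →
      (∃ u : F, RepGQ δ K u ∧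
        u ^ N = MvPolynomial.aeval (fun i => δ^[i] u) Q) →
      ∃ w : F, IsAlgebraic ↥K w ∧
        w ^ N = MvPolynomial.aeval (fun i => δ^[i] w) Q)
    (n : ℕ) (hn : 0 < n) (a : ℕ → F) (ha : ∀ i, a i ∈ K)
    (y : F) (hy : y ≠ 0) (hsol : Lop δ n a y = 0) (hrep : RepGQ δ K y) :
    ∃ y₁ : F, y₁ ≠ 0 ∧ Lop δ n a y₁ = 0 ∧
      ∃ g : F, IsAlgebraic ↥K g ∧ δ y₁ = g * y₁ :=
  statement19_general δ K hK hexp hRos n hn a ha y hy hsol hrep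
end
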